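/- Let M be a deterministic n×n symmetric matrix, p ∈ (0,1), and E the subsampling residual of M. Then E[E] = 0 and E[E²] is a diagonal matrix whose i-th diagonal entry equals ((1−p)/p)·‖M_i‖₂², where M_i is the i-th column of M. -/

import Mathlib

/-!
Write `E ω i j = c * M i j * C ω i j` with `c = √((1 - p) / p)`. The two values of each entry of
`C` are weighted so that `𝔼[C i j] = 0` and `𝔼[C i j ^ 2] = 1`. In
`(E * E) i j = c² ∑ₖ M i k M k j C i k C k j`, for `i ≠ j` the factors `C i k` and `C k j` are
distinct upper-triangular entries, hence independent, so every term has mean zero; for `i = j`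
the `k`-th term is `c² (M k i)² (C i k)²`, of mean `c² (M k i)²`.
-/

open MeasureTheory ProbabilityTheory Filter Matrix
open scoped ENNReal NNReal BigOperators

/-- The spectral norm (largest singular value) of a real matrix, i.e. the operator norm
of the induced map between Euclidean spaces. -/
noncomputable def matSpectralNorm {m n : Type*} [Fintype m] [Fintype n] [DecidableEq n]
    (A : Matrix m n ℝ) : ℝ :=
  ‖LinearMap.toContinuousLinearMap (Matrix.toEuclideanLin A)‖

/-- The Euclidean norm of a vector. -/
noncomputable def euclNorm {n : Type*} [Fintype n] (x : n → ℝ) : ℝ :=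
  Real.sqrt (∑ i, x i ^ 2)

/-- The sup norm `max_{i,j} |A i j|` of a matrix. -/
noncomputable def supNorm {m n : Type*} [Fintype m] [Fintype n] (A : Matrix m n ℝ) : ℝ :=
  ‖(fun i j => A i j : m → n → ℝ)‖

/-- An `m × m` Bernoulli-type symmetric random matrix with parameter `p`: the
on-or-above-diagonal entries are independent, equal to `√((1-p)/p)` with probability `p`
and to `-√(p/(1-p))` with probability `1-p`. -/
def IsBernoulliType {Ω : Type*} [MeasurableSpace Ω] (P : Measure Ω) {m : ℕ} (p : ℝ)
    (C : Ω → Matrix (Fin m) (Fin m) ℝ) : Prop :=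
  (∀ ω, (C ω).IsSymm) ∧
  (∀ i j, Measurable fun ω => C ω i j) ∧
  iIndepFun (m := fun _ : {q : Fin m × Fin m // q.1 ≤ q.2} => (inferInstance : MeasurableSpace ℝ))
    (fun q ω => C ω q.val.1 q.val.2) P ∧
  ∀ i j : Fin m, i ≤ j →
    P {ω | C ω i j = Real.sqrt ((1 - p) / p)} = ENNReal.ofReal p ∧
    P {ω | C ω i j = -Real.sqrt (p / (1 - p))} = ENNReal.ofReal (1 - p)

/-- `E` is the subsampling residual `E = S - M` of the symmetric matrix `M` with sampling
probability `p`; equivalently `E = √((1-p)/p) • (M ∘ C)` with `C` Bernoulli-type. -/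
def IsSubsampleResidual {Ω : Type*} [MeasurableSpace Ω] (P : Measure Ω) {n : ℕ} (p : ℝ)
    (M : Matrix (Fin n) (Fin n) ℝ) (E : Ω → Matrix (Fin n) (Fin n) ℝ) : Prop :=
  ∃ C : Ω → Matrix (Fin n) (Fin n) ℝ, IsBernoulliType P p C ∧
    ∀ ω, E ω = Real.sqrt ((1 - p) / p) • Matrix.hadamard M (C ω)

section TwoPointLaw

variable {Ω α : Type*} [MeasurableSpace Ω] [MeasurableSpace α] [MeasurableSingletonClass α]
  {P : Measure Ω} [IsProbabilityMeasure P] {f : Ω → α} {a b : α} {pa pb : ℝ}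

lemma ae_eq_or_eq_of_measure_eq_ofReal (hf : Measurable f) (hab : a ≠ b)
    (hpa : 0 ≤ pa) (hpb : 0 ≤ pb) (hsum : pa + pb = 1)
    (hA : P {ω | f ω = a} = ENNReal.ofReal pa) (hB : P {ω | f ω = b} = ENNReal.ofReal pb) :
    ∀ᵐ ω ∂P, f ω = a ∨ f ω = b := by
  have hdisj : Disjoint {ω | f ω = a} {ω | f ω = b} :=
    Set.disjoint_left.2 fun ω (ha : f ω = a) (hb : f ω = b) => hab (ha.symm.trans hb)
  refine (mem_ae_iff_prob_eq_one ((hf (measurableSet_singleton a)).union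
    (hf (measurableSet_singleton b)))).2 ?_
  show P ({ω | f ω = a} ∪ {ω | f ω = b}) = 1
  rw [measure_union hdisj (hf (measurableSet_singleton b)), hA, hB, ← ENNReal.ofReal_add hpa hpb,
    hsum, ENNReal.ofReal_one]

lemma integral_comp_of_measure_eq_ofReal (hf : Measurable f) (hab : a ≠ b)
    (hpa : 0 ≤ pa) (hpb : 0 ≤ pb) (hsum : pa + pb = 1)
    (hA : P {ω | f ω = a} = ENNReal.ofReal pa) (hB : P {ω | f ω = b} = ENNReal.ofReal pb)
    (φ : α → ℝ) :
    Integrable (fun ω => φ (f ω)) P ∧ ∫ ω, φ (f ω) ∂P = pa * φ a + pb * φ b := by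
  have hAm : MeasurableSet {ω | f ω = a} := hf (measurableSet_singleton a)
  have hBm : MeasurableSet {ω | f ω = b} := hf (measurableSet_singleton b)
  have hA_int := (integrable_const (μ := P) (φ a)).indicator hAm
  have hB_int := (integrable_const (μ := P) (φ b)).indicator hBm
  have hae : (fun ω => φ (f ω)) =ᵐ[P] fun ω =>
      {ω | f ω = a}.indicator (fun _ => φ a) ω + {ω | f ω = b}.indicator (fun _ => φ b) ω := by
    filter_upwards [ae_eq_or_eq_of_measure_eq_ofReal hf hab hpa hpb hsum hA hB] with ω hω
    rcases hω with h | h <;> simp [h, hab, hab.symm]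
  refine ⟨(hA_int.add hB_int).congr hae.symm, ?_⟩
  rw [integral_congr_ae hae, integral_add hA_int hB_int, integral_indicator_const _ hAm,
    integral_indicator_const _ hBm, measureReal_def, measureReal_def, hA, hB,
    ENNReal.toReal_ofReal hpa, ENNReal.toReal_ofReal hpb, smul_eq_mul, smul_eq_mul]

end TwoPointLaw

lemma Real.mul_sqrt_div_eq_sqrt_mul {x : ℝ} (hx : 0 < x) (y : ℝ) : x * √(y / x) = √(x * y) := by
  rw [← Real.sqrt_mul_self hx.le, ← Real.sqrt_mul (mul_self_nonneg x), Real.sqrt_mul_self hx.le]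
  congr 1
  field_simp

lemma bernoulliValues_mean_eq_zero {p : ℝ} (hp0 : 0 < p) (hp1 : p < 1) :
    p * √((1 - p) / p) + (1 - p) * -√(p / (1 - p)) = 0 := by
  rw [mul_neg, Real.mul_sqrt_div_eq_sqrt_mul hp0, Real.mul_sqrt_div_eq_sqrt_mul (sub_pos.2 hp1),
    mul_comm, add_neg_cancel]

lemma bernoulliValues_second_moment_eq_one {p : ℝ} (hp0 : 0 < p) (hp1 : p < 1) :
    p * √((1 - p) / p) ^ 2 + (1 - p) * (-√(p / (1 - p))) ^ 2 = 1 := by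
  have h1p : 0 < 1 - p := sub_pos.2 hp1
  rw [neg_sq, Real.sq_sqrt (div_pos h1p hp0).le, Real.sq_sqrt (div_pos hp0 h1p).le]
  field_simp
  ring

def upperIndex {ι : Type*} [LinearOrder ι] (i j : ι) : {q : ι × ι // q.1 ≤ q.2} :=
  if h : i ≤ j then ⟨(i, j), h⟩ else ⟨(j, i), le_of_not_ge h⟩

lemma eq_of_upperIndex_eq {ι : Type*} [LinearOrder ι] {i j k : ι}
    (h : upperIndex i k = upperIndex k j) : i = j := by
  unfold upperIndex at h
  split_ifs at h <;> simp only [Subtype.mk.injEq, Prod.mk.injEq] at h <;> grind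

namespace IsBernoulliType

variable {Ω : Type*} [MeasurableSpace Ω] {P : Measure Ω} {m : ℕ} {p : ℝ}
  {C : Ω → Matrix (Fin m) (Fin m) ℝ}

lemma apply_upperIndex (hC : IsBernoulliType P p C) (ω : Ω) (i j : Fin m) :
    C ω (upperIndex i j).1.1 (upperIndex i j).1.2 = C ω i j := by
  unfold upperIndex
  split_ifs
  · rfl
  · exact (hC.1 ω).apply i j

lemma measure_eq (hC : IsBernoulliType P p C) (i j : Fin m) :
    P {ω | C ω i j = √((1 - p) / p)} = ENNReal.ofReal p ∧
      P {ω | C ω i j = -√(p / (1 - p))} = ENNReal.ofReal (1 - p) := by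
  simpa only [hC.apply_upperIndex] using hC.2.2.2 _ _ (upperIndex i j).2

lemma integral_comp [IsProbabilityMeasure P] (hC : IsBernoulliType P p C) (hp0 : 0 < p)
    (hp1 : p < 1) (i j : Fin m) (φ : ℝ → ℝ) :
    Integrable (fun ω => φ (C ω i j)) P ∧
      ∫ ω, φ (C ω i j) ∂P = p * φ √((1 - p) / p) + (1 - p) * φ (-√(p / (1 - p))) := by
  have hvalues : √((1 - p) / p) ≠ -√(p / (1 - p)) := by
    have := Real.sqrt_pos.2 (div_pos (sub_pos.2 hp1) hp0)
    linarith [Real.sqrt_nonneg (p / (1 - p))]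
  exact integral_comp_of_measure_eq_ofReal (hC.2.1 i j) hvalues hp0.le (sub_pos.2 hp1).le
    (add_sub_cancel p 1) (hC.measure_eq i j).1 (hC.measure_eq i j).2 φ

lemma integral_apply [IsProbabilityMeasure P] (hC : IsBernoulliType P p C) (hp0 : 0 < p)
    (hp1 : p < 1) (i j : Fin m) : ∫ ω, C ω i j ∂P = 0 :=
  (hC.integral_comp hp0 hp1 i j id).2.trans (bernoulliValues_mean_eq_zero hp0 hp1)

lemma indepFun_apply_apply (hC : IsBernoulliType P p C) {i j : Fin m} (k : Fin m) (hij : i ≠ j) :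
    IndepFun (fun ω => C ω i k) (fun ω => C ω k j) P := by
  simpa only [hC.apply_upperIndex] using
    hC.2.2.1.indepFun (mt eq_of_upperIndex_eq hij : upperIndex i k ≠ upperIndex k j)

lemma integral_mul_apply [IsProbabilityMeasure P] (hC : IsBernoulliType P p C) (hp0 : 0 < p)
    (hp1 : p < 1) (i j k : Fin m) :
    Integrable (fun ω => C ω i k * C ω k j) P ∧
      ∫ ω, C ω i k * C ω k j ∂P = if i = j then 1 else 0 := by
  by_cases hij : i = j
  · subst hij
    have hsq : (fun ω => C ω i k * C ω k i) = fun ω => C ω i k ^ 2 :=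
      funext fun ω => by rw [(hC.1 ω).apply i k, sq]
    rw [hsq, if_pos rfl]
    obtain ⟨hint, hval⟩ := hC.integral_comp hp0 hp1 i k (· ^ 2)
    exact ⟨hint, hval.trans (bernoulliValues_second_moment_eq_one hp0 hp1)⟩
  · have hind := hC.indepFun_apply_apply k hij
    have hik := (hC.integral_comp hp0 hp1 i k id).1
    have hkj := (hC.integral_comp hp0 hp1 k j id).1
    refine ⟨hind.integrable_mul hik hkj, ?_⟩
    rw [hind.integral_fun_mul_eq_mul_integral hik.1 hkj.1, hC.integral_apply hp0 hp1,
      zero_mul, if_neg hij]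

end IsBernoulliType

/-- the subsampling residual has mean zero, and `E[E²]` is the diagonal
matrix with entries `((1-p)/p)·‖M_i‖₂²`. -/
theorem subsample_residual_mean_and_second_moment
    {Ω : Type*} [MeasurableSpace Ω] (P : Measure Ω) [IsProbabilityMeasure P]
    {n : ℕ} (M : Matrix (Fin n) (Fin n) ℝ) (p : ℝ)
    (E : Ω → Matrix (Fin n) (Fin n) ℝ)
    (hsymm : M.IsSymm) (hp0 : 0 < p) (hp1 : p < 1)
    (hE : IsSubsampleResidual P p M E) :
    (∀ i j : Fin n, (∫ ω, E ω i j ∂P) = 0) ∧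
    (∀ i j : Fin n, (∫ ω, (E ω * E ω) i j ∂P) =
      if i = j then (1 - p) / p * ∑ k, (M k i) ^ 2 else 0) := by
  obtain ⟨C, hC, hEC⟩ := hE
  set c := √((1 - p) / p)
  have hE_apply : ∀ ω i j, E ω i j = c * M i j * C ω i j := by
    simp [hEC, mul_assoc]
  have hE_mul_apply : ∀ ω i j,
      (E ω * E ω) i j = ∑ k, c ^ 2 * (M i k * M k j) * (C ω i k * C ω k j) := by
    intro ω i j
    simp only [Matrix.mul_apply, hE_apply]
    exact Finset.sum_congr rfl fun k _ => by ring
  refine ⟨fun i j => ?_, fun i j => ?_⟩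
  · simp_rw [hE_apply, integral_const_mul, hC.integral_apply hp0 hp1, mul_zero]
  · simp_rw [hE_mul_apply]
    rw [integral_finsetSum _ fun k _ => (hC.integral_mul_apply hp0 hp1 i j k).1.const_mul _]
    simp_rw [integral_const_mul, (hC.integral_mul_apply hp0 hp1 i j _).2]
    split_ifs with hij
    · subst hij
      rw [Real.sq_sqrt (div_pos (sub_pos.2 hp1) hp0).le, Finset.mul_sum]
      simp [hsymm.apply, sq]
    · simp
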